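/- Let J be a constant invertible antisymmetric 2d×2d real matrix, let ω ∈ ℝ^ℓ, and let Z: ℝ^ℓ → GL(2d,ℝ) satisfy Z(θ)^T J Z(θ) = J for all θ. Define the backward cocycle M(−n,θ) = Z(θ−nω)^{−1} Z(θ−(n−1)ω)^{−1} ··· Z(θ−ω)^{−1} for n ≥ 1. Suppose u, v ∈ ℝ^{2d}, θ ∈ ℝ^ℓ, and there are constants C > 0 and μ₂, μ₃ > 0 with μ₂ μ₃ < 1 such that ‖M(−n,θ) u‖ ≤ C μ₂^n and ‖M(−n,θ) v‖ ≤ C μ₃^n for all n ≥ 1. Then u^T J v = 0. -/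
import Mathlib

open Matrix

/-- The backward cocycle over the rotation by `ω` with generator `Z`:
`bwdCocycle Z ω n θ = Z(θ−nω)⁻¹ Z(θ−(n−1)ω)⁻¹ ⋯ Z(θ−ω)⁻¹`, with
`bwdCocycle Z ω 0 θ = Id`. -/
noncomputable def bwdCocycle {D ℓ : ℕ}
    (Z : (Fin ℓ → ℝ) → Matrix (Fin D) (Fin D) ℝ) (ω : Fin ℓ → ℝ) :
    ℕ → (Fin ℓ → ℝ) → Matrix (Fin D) (Fin D) ℝ
  | 0, _ => 1
  | n + 1, θ => bwdCocycle Z ω n (θ - ω) * (Z (θ - ω))⁻¹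

lemma bwdCocycle_symp {D ℓ : ℕ} (J : Matrix (Fin D) (Fin D) ℝ)
    (ω : Fin ℓ → ℝ) (Z : (Fin ℓ → ℝ) → Matrix (Fin D) (Fin D) ℝ)
    (hZinv : ∀ θ, IsUnit (Z θ).det)
    (hZsymp : ∀ θ, (Z θ)ᵀ * J * Z θ = J) :
    ∀ n θ, (bwdCocycle Z ω n θ)ᵀ * J * bwdCocycle Z ω n θ = J := by
  intro n
  induction n with
  | zero => intro θ; simp [bwdCocycle]
  | succ n ih =>
    intro θ
    have hinvsymp : (Z (θ - ω))⁻¹ᵀ * J * (Z (θ - ω))⁻¹ = J := by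
      have h1 : Z (θ - ω) * (Z (θ - ω))⁻¹ = 1 :=
        Matrix.mul_nonsing_inv _ (hZinv _)
      calc (Z (θ - ω))⁻¹ᵀ * J * (Z (θ - ω))⁻¹
          = (Z (θ - ω))⁻¹ᵀ * ((Z (θ - ω))ᵀ * J * Z (θ - ω)) * (Z (θ - ω))⁻¹ := by
            rw [hZsymp]
        _ = (Z (θ - ω) * (Z (θ - ω))⁻¹)ᵀ * J * (Z (θ - ω) * (Z (θ - ω))⁻¹) := by
            simp only [Matrix.transpose_mul]; ring_nf; noncomm_ring
        _ = J := by rw [h1]; simp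
    show (bwdCocycle Z ω n (θ - ω) * (Z (θ - ω))⁻¹)ᵀ * J *
        (bwdCocycle Z ω n (θ - ω) * (Z (θ - ω))⁻¹) = J
    calc (bwdCocycle Z ω n (θ - ω) * (Z (θ - ω))⁻¹)ᵀ * J *
        (bwdCocycle Z ω n (θ - ω) * (Z (θ - ω))⁻¹)
        = (Z (θ - ω))⁻¹ᵀ * ((bwdCocycle Z ω n (θ - ω))ᵀ * J *
            bwdCocycle Z ω n (θ - ω)) * (Z (θ - ω))⁻¹ := by
          simp only [Matrix.transpose_mul]; noncomm_ring
      _ = (Z (θ - ω))⁻¹ᵀ * J * (Z (θ - ω))⁻¹ := by rw [ih]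
      _ = J := hinvsymp

lemma dot_mulVec_bound {m : ℕ} (J : Matrix (Fin m) (Fin m) ℝ)
    (x y : Fin m → ℝ) :
    |x ⬝ᵥ J.mulVec y| ≤ (∑ i, ∑ j, |J i j|) * (‖x‖ * ‖y‖) := by
  have hx : ∀ i, |x i| ≤ ‖x‖ := fun i => by
    simpa [Real.norm_eq_abs] using norm_le_pi_norm x i
  have hy : ∀ j, |y j| ≤ ‖y‖ := fun j => by
    simpa [Real.norm_eq_abs] using norm_le_pi_norm y j
  have hxnn : 0 ≤ ‖x‖ := norm_nonneg _
  have hynn : 0 ≤ ‖y‖ := norm_nonneg _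
  calc |x ⬝ᵥ J.mulVec y| = |∑ i, ∑ j, x i * (J i j * y j)| := by
        simp [dotProduct, Matrix.mulVec, Finset.mul_sum]
    _ ≤ ∑ i, ∑ j, |x i * (J i j * y j)| := by
        refine (Finset.abs_sum_le_sum_abs _ _).trans ?_
        exact Finset.sum_le_sum fun i _ => Finset.abs_sum_le_sum_abs _ _
    _ ≤ ∑ i, ∑ j, |J i j| * (‖x‖ * ‖y‖) := by
        refine Finset.sum_le_sum fun i _ => Finset.sum_le_sum fun j _ => ?_
        rw [abs_mul, abs_mul]
        calc |x i| * (|J i j| * |y j|) ≤ ‖x‖ * (|J i j| * ‖y‖) := by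
              gcongr
              · exact hx i
              · exact hy j
          _ = |J i j| * (‖x‖ * ‖y‖) := by ring
    _ = (∑ i, ∑ j, |J i j|) * (‖x‖ * ‖y‖) := by
        rw [Finset.sum_mul]
        exact Finset.sum_congr rfl fun i _ => (Finset.sum_mul _ _ _).symm

/-- Let `J` be a constant invertible antisymmetric `2d×2d` matrix
and let `Z : ℝ^ℓ → GL(2d,ℝ)` be symplectic (`Z(θ)ᵀ J Z(θ) = J`).  If two vectors
`u, v` contract under the backward cocycle at rates `μ₂`, `μ₃` with `μ₂ μ₃ < 1`,
then `uᵀ J v = 0`. -/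
theorem stmt16 (d ℓ : ℕ) (J : Matrix (Fin (2 * d)) (Fin (2 * d)) ℝ)
    (hJanti : Jᵀ = -J) (hJinv : IsUnit J.det)
    (ω : Fin ℓ → ℝ) (Z : (Fin ℓ → ℝ) → Matrix (Fin (2 * d)) (Fin (2 * d)) ℝ)
    (hZinv : ∀ θ, IsUnit (Z θ).det)
    (hZsymp : ∀ θ, (Z θ)ᵀ * J * Z θ = J)
    (u v : Fin (2 * d) → ℝ) (θ : Fin ℓ → ℝ) (C μ₂ μ₃ : ℝ)
    (hC : 0 < C) (hμ₂ : 0 < μ₂) (hμ₃ : 0 < μ₃) (hμ : μ₂ * μ₃ < 1)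
    (hu : ∀ n : ℕ, 1 ≤ n → ‖(bwdCocycle Z ω n θ).mulVec u‖ ≤ C * μ₂ ^ n)
    (hv : ∀ n : ℕ, 1 ≤ n → ‖(bwdCocycle Z ω n θ).mulVec v‖ ≤ C * μ₃ ^ n) :
    u ⬝ᵥ J.mulVec v = 0 := by
  set S := ∑ i, ∑ j, |J i j| with hS
  have hSnn : 0 ≤ S :=
    Finset.sum_nonneg fun i _ => Finset.sum_nonneg fun j _ => abs_nonneg _
  -- invariance: a = (M u) ⬝ᵥ J (M v)
  have key : ∀ n : ℕ, u ⬝ᵥ J.mulVec v =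
      ((bwdCocycle Z ω n θ).mulVec u) ⬝ᵥ
        J.mulVec ((bwdCocycle Z ω n θ).mulVec v) := by
    intro n
    set M := bwdCocycle Z ω n θ with hM
    have hsymp : Mᵀ * J * M = J := bwdCocycle_symp J ω Z hZinv hZsymp n θ
    calc u ⬝ᵥ J.mulVec v = u ⬝ᵥ (Mᵀ * J * M).mulVec v := by rw [hsymp]
      _ = (M.mulVec u) ⬝ᵥ J.mulVec (M.mulVec v) := by
          rw [Matrix.dotProduct_mulVec, Matrix.dotProduct_mulVec,
            ← Matrix.mulVec_transpose, Matrix.transpose_mul,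
            Matrix.transpose_mul, Matrix.transpose_transpose,
            ← Matrix.mulVec_mulVec, ← Matrix.mulVec_mulVec,
            Matrix.mulVec_transpose, Matrix.mulVec_transpose,
            ← Matrix.dotProduct_mulVec]
  have bound : ∀ n : ℕ, 1 ≤ n →
      |u ⬝ᵥ J.mulVec v| ≤ S * C ^ 2 * (μ₂ * μ₃) ^ n := by
    intro n hn
    rw [key n]
    refine (dot_mulVec_bound J _ _).trans ?_
    have h1 := hu n hn
    have h2 := hv n hn
    have : ‖(bwdCocycle Z ω n θ).mulVec u‖ * ‖(bwdCocycle Z ω n θ).mulVec v‖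
        ≤ (C * μ₂ ^ n) * (C * μ₃ ^ n) := by
      exact mul_le_mul h1 h2 (norm_nonneg _) (by positivity)
    calc S * (‖(bwdCocycle Z ω n θ).mulVec u‖ *
          ‖(bwdCocycle Z ω n θ).mulVec v‖)
        ≤ S * ((C * μ₂ ^ n) * (C * μ₃ ^ n)) := by gcongr
      _ = S * C ^ 2 * (μ₂ * μ₃) ^ n := by ring
  -- limit argument
  have htend : Filter.Tendsto (fun n : ℕ => S * C ^ 2 * (μ₂ * μ₃) ^ n)
      Filter.atTop (nhds 0) := by
    have : Filter.Tendsto (fun n : ℕ => (μ₂ * μ₃) ^ n) Filter.atTop (nhds 0) :=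
      tendsto_pow_atTop_nhds_zero_of_lt_one (by positivity) hμ
    simpa using this.const_mul (S * C ^ 2)
  have habs : |u ⬝ᵥ J.mulVec v| ≤ 0 := by
    refine ge_of_tendsto htend ?_
    filter_upwards [Filter.eventually_ge_atTop 1] with n hn
    exact bound n hn
  exact abs_nonpos_iff.mp habs
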